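/- arXiv:2002.10410 — 6 statements merged into one kernel-verified Lean document; each statement's English description precedes it below -/
import Mathlib

section
/- Let n ≥ 2 and fix layer dimensions d_0, …, d_{n−1} ∈ ℕ, weight matrices W_k ∈ ℝ^{d_k × d_{k−1}} and biases b_k ∈ ℝ^{d_k} for k = 1, …, n−1, a final weight row vector W_n ∈ ℝ^{1 × d_{n−1}} with bias b_n ∈ ℝ, a nonempty compact input set C ⊆ ℝ^{d_0}, and intermediate bounds l_k, u_k ∈ ℝ^{d_k} with l_k ≤ u_k componentwise for k = 1, …, n−1. Then for every choice of dual variables μ = (μ_1, …, μ_{n−1}) and λ = (λ_1, …, λ_{n−1}) with μ_k, λ_k ∈ ℝ^{d_k}, the Lagrangian-decomposition dual value satisfies q(μ) ≥ d(μ, λ), where d is the Lagrangian-relaxation dual value of Dvijotham et al. -/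
/-- PLANET convex-hull relaxation of the ReLU, coordinatewise:
`l`, `u` are pre-activation bounds, `x` the pre-activation variable,
`z` the post-activation variable. -/
def planetHull (l u x z : ℝ) : Prop :=
  (l < 0 → 0 < u → (0 ≤ z ∧ x ≤ z ∧ z ≤ u * (x - l) / (u - l))) ∧
  (u ≤ 0 → z = 0) ∧
  (0 ≤ l → z = x)

lemma ldd_mul_lb {x B c : ℝ} (h : |x| ≤ B) : -(|c| * B) ≤ c * x := by
  have h1 : |c * x| ≤ |c| * B := by
    rw [abs_mul]; exact mul_le_mul_of_nonneg_left h (abs_nonneg c)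
  have := neg_abs_le (c * x)
  linarith

lemma ldd_sum_lb {ι : Type*} (s : Finset ι) (c f B : ι → ℝ)
    (h : ∀ i ∈ s, |f i| ≤ B i) :
    -(∑ i ∈ s, |c i| * B i) ≤ ∑ i ∈ s, c i * f i := by
  rw [← Finset.sum_neg_distrib]
  exact Finset.sum_le_sum fun i hi => ldd_mul_lb (h i hi)

lemma ldd_zbox (l u zB z : ℝ) (hl : l ≤ zB) (hu : zB ≤ u)
    (hph : planetHull l u zB z) : max l 0 ≤ z ∧ z ≤ max u 0 := by
  obtain ⟨ha, hb, hp⟩ := hph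
  rcases le_or_gt 0 l with h0 | h0
  · rw [hp h0]
    exact ⟨max_le hl (h0.trans hl), hu.trans (le_max_left u 0)⟩
  · rcases le_or_gt u 0 with h1 | h1
    · rw [hb h1]
      exact ⟨max_le (by linarith) le_rfl, le_max_right _ _⟩
    · obtain ⟨hz0, hzB, hzu⟩ := ha h0 h1
      refine ⟨max_le (by linarith) hz0, hzu.trans (le_max_iff.mpr (Or.inl ?_))⟩
      rw [div_le_iff₀ (by linarith : (0:ℝ) < u - l)]
      nlinarith

lemma ldd_key (l u zB z a c : ℝ) (hl : l ≤ zB) (hu : zB ≤ u)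
    (hph : planetHull l u zB z) :
    ∃ t, l ≤ t ∧ t ≤ u ∧ a * t + c * (z - max t 0) ≤ a * zB := by
  obtain ⟨ha, hb, hp⟩ := hph
  rcases le_or_gt 0 l with h0 | h0
  · refine ⟨zB, hl, hu, ?_⟩
    rw [hp h0, max_eq_left (by linarith : (0:ℝ) ≤ zB)]
    nlinarith [le_refl (a*zB)]
  · rcases le_or_gt u 0 with h1 | h1
    · refine ⟨zB, hl, hu, ?_⟩
      rw [hb h1, max_eq_right (by linarith : zB ≤ (0:ℝ))]
      linarith
    · obtain ⟨hz0, hzB, hzu⟩ := ha h0 h1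
      have hC : z * (u - l) ≤ u * (zB - l) := by
        rw [← le_div_iff₀ (by linarith : (0:ℝ) < u - l)]; exact hzu
      set m := min (min (a*l) 0) ((a-c)*u) with hm
      have hm1 : m ≤ a*l := le_trans (min_le_left _ _) (min_le_left _ _)
      have hm2 : m ≤ 0 := le_trans (min_le_left _ _) (min_le_right _ _)
      have hm3 : m ≤ (a-c)*u := min_le_right _ _
      have hmin : m ≤ a * zB - c * z := by
        have h1' : 0 ≤ u * (z - zB) * (a*l - m) :=
          mul_nonneg (mul_nonneg (by linarith) (by linarith)) (by linarith)
        have h2' : 0 ≤ (-l) * z * ((a-c)*u - m) :=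
          mul_nonneg (mul_nonneg (by linarith) hz0) (by linarith)
        have h3' : 0 ≤ (u*(zB-l) - (u-l)*z) * (0 - m) :=
          mul_nonneg (by nlinarith) (by linarith)
        nlinarith [mul_pos (by linarith : (0:ℝ) < -l) h1]
      rcases le_total (a*l) ((a-c)*u) with c1 | c1
      · rcases le_total (a*l) 0 with c2 | c2
        · refine ⟨l, le_rfl, by linarith, ?_⟩
          rw [max_eq_right (by linarith : l ≤ (0:ℝ))]
          have : a*l ≤ m := le_min (le_min le_rfl c2) c1
          linarith
        · refine ⟨0, by linarith, by linarith, ?_⟩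
          rw [max_self]
          have : (0:ℝ) ≤ m := le_min (le_min c2 le_rfl) (c2.trans c1)
          linarith
      · rcases le_total ((a-c)*u) 0 with c2 | c2
        · refine ⟨u, by linarith, le_rfl, ?_⟩
          rw [max_eq_left (by linarith : (0:ℝ) ≤ u)]
          have : (a-c)*u ≤ m := le_min (le_min c1 c2) le_rfl
          linarith
        · refine ⟨0, by linarith, by linarith, ?_⟩
          rw [max_self]
          have : (0:ℝ) ≤ m := le_min (le_min (c2.trans c1) le_rfl) c2
          linarith

noncomputable def lddZ (dd : ℕ → ℕ) (l : (k : ℕ) → Fin (dd k) → ℝ)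
    (z0 : Fin (dd 0) → ℝ) : (k : ℕ) → Fin (dd k) → ℝ := fun k => match k with
  | 0 => z0
  | (m+1) => fun j => max (l (m+1) j) 0

noncomputable def lddZA (dd : ℕ → ℕ)
    (W : (k : ℕ) → Matrix (Fin (dd (k + 1))) (Fin (dd k)) ℝ)
    (b : (k : ℕ) → Fin (dd (k + 1)) → ℝ) (l : (k : ℕ) → Fin (dd k) → ℝ)
    (z0 : Fin (dd 0) → ℝ) : (k : ℕ) → Fin (dd k) → ℝ := fun k => match k with
  | 0 => fun _ => 0
  | (m+1) => fun j => Matrix.mulVec (W m) (lddZ dd l z0 m) j + b m j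

lemma lddZ_succ (dd : ℕ → ℕ) (l : (k : ℕ) → Fin (dd k) → ℝ)
    (z0 : Fin (dd 0) → ℝ) (m : ℕ) (j : Fin (dd (m+1))) :
    lddZ dd l z0 (m+1) j = max (l (m+1) j) 0 := rfl

/-- For ReLU networks, the Lagrangian-decomposition dual value `q μ` is at least the
Lagrangian-relaxation dual value `d (μ, λ)` of Dvijotham et al., for any dual variables
`μ`, `λ`.  Here `W k`, `b k` represent the layer map `W_{k+1}`, `b_{k+1}` sending layer `k`
to layer `k+1` (for `k = 0, …, n-2`), `Wn`, `bn` are the final row vector and bias, and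
`l k`, `u k` are the intermediate bounds at layer `k` (for `k = 1, …, n-1`). -/
theorem decomposition_dual_dominates_relaxation_dual
    (n : ℕ) (hn : 2 ≤ n) (dd : ℕ → ℕ)
    (W : (k : ℕ) → Matrix (Fin (dd (k + 1))) (Fin (dd k)) ℝ)
    (b : (k : ℕ) → Fin (dd (k + 1)) → ℝ)
    (Wn : Fin (dd (n - 1)) → ℝ) (bn : ℝ)
    (C : Set (Fin (dd 0) → ℝ)) (hCne : C.Nonempty) (hCcomp : IsCompact C)
    (l u : (k : ℕ) → Fin (dd k) → ℝ)
    (hlu : ∀ k, 1 ≤ k → k ≤ n - 1 → ∀ j, l k j ≤ u k j)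
    (μ lam : (k : ℕ) → Fin (dd k) → ℝ) :
    sInf {y : ℝ |
      ∃ (z : (k : ℕ) → Fin (dd k) → ℝ) (zhat : (k : ℕ) → Fin (dd k) → ℝ),
        z 0 ∈ C ∧
        (∀ m ∈ Finset.range (n - 1), ∀ j,
          l (m + 1) j ≤ zhat (m + 1) j ∧ zhat (m + 1) j ≤ u (m + 1) j) ∧
        (∀ m ∈ Finset.range (n - 1), ∀ j,
          max (l (m + 1) j) 0 ≤ z (m + 1) j ∧ z (m + 1) j ≤ max (u (m + 1) j) 0) ∧
        y = (∑ j, Wn j * z (n - 1) j) + bn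
          + ∑ m ∈ Finset.range (n - 1), ∑ j,
              μ (m + 1) j * (zhat (m + 1) j - Matrix.mulVec (W m) (z m) j - b m j)
          + ∑ m ∈ Finset.range (n - 1), ∑ j,
              lam (m + 1) j * (z (m + 1) j - max (zhat (m + 1) j) 0)}
    ≤
    sInf {y : ℝ |
      ∃ (z : (k : ℕ) → Fin (dd k) → ℝ)
        (zA : (k : ℕ) → Fin (dd k) → ℝ) (zB : (k : ℕ) → Fin (dd k) → ℝ),
        z 0 ∈ C ∧
        (∀ j, zA 1 j = Matrix.mulVec (W 0) (z 0) j + b 0 j) ∧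
        (∀ m ∈ Finset.range (n - 1), ∀ j,
          l (m + 1) j ≤ zB (m + 1) j ∧ zB (m + 1) j ≤ u (m + 1) j) ∧
        (∀ m ∈ Finset.range (n - 1), ∀ j,
          planetHull (l (m + 1) j) (u (m + 1) j) (zB (m + 1) j) (z (m + 1) j)) ∧
        (∀ m ∈ Finset.range (n - 2), ∀ j,
          zA (m + 2) j = Matrix.mulVec (W (m + 1)) (z (m + 1)) j + b (m + 1) j) ∧
        y = (∑ j, Wn j * z (n - 1) j) + bn
          + ∑ m ∈ Finset.range (n - 1), ∑ j,
              μ (m + 1) j * (zB (m + 1) j - zA (m + 1) j)} := by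
  obtain ⟨z0, hz0⟩ := hCne
  -- bounds coming from compactness of `C`
  obtain ⟨R, hR⟩ := hCcomp.isBounded.exists_norm_le
  -- per-coordinate bound functions
  set Bc : (k : ℕ) → Fin (dd k) → ℝ := fun k => match k with
    | 0 => fun _ => R
    | (m+1) => fun j => |l (m+1) j| + |u (m+1) j| with hBc
  have hBc0 : ∀ j, Bc 0 j = R := fun _ => rfl
  have hBcS : ∀ m j, Bc (m+1) j = |l (m+1) j| + |u (m+1) j| := fun _ _ => rfl
  -- the first set is bounded below
  have hBdd : BddBelow {y : ℝ |
      ∃ (z : (k : ℕ) → Fin (dd k) → ℝ) (zhat : (k : ℕ) → Fin (dd k) → ℝ),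
        z 0 ∈ C ∧
        (∀ m ∈ Finset.range (n - 1), ∀ j,
          l (m + 1) j ≤ zhat (m + 1) j ∧ zhat (m + 1) j ≤ u (m + 1) j) ∧
        (∀ m ∈ Finset.range (n - 1), ∀ j,
          max (l (m + 1) j) 0 ≤ z (m + 1) j ∧ z (m + 1) j ≤ max (u (m + 1) j) 0) ∧
        y = (∑ j, Wn j * z (n - 1) j) + bn
          + ∑ m ∈ Finset.range (n - 1), ∑ j,
              μ (m + 1) j * (zhat (m + 1) j - Matrix.mulVec (W m) (z m) j - b m j)
          + ∑ m ∈ Finset.range (n - 1), ∑ j,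
              lam (m + 1) j * (z (m + 1) j - max (zhat (m + 1) j) 0)} := by
    refine ⟨-(∑ j, |Wn j| * Bc (n-1) j) + bn
      - ∑ m ∈ Finset.range (n-1), ∑ j, |μ (m+1) j| *
          (Bc (m+1) j + (∑ i, |W m j i| * Bc m i) + |b m j|)
      - ∑ m ∈ Finset.range (n-1), ∑ j, |lam (m+1) j| * (2 * Bc (m+1) j), ?_⟩
    rintro y ⟨z, zhat, hzC, hbox1, hbox2, rfl⟩
    -- coordinatewise bounds on the variables
    have hz0b : ∀ j, |z 0 j| ≤ R := by
      intro j
      have := norm_le_pi_norm (z 0) j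
      simpa using this.trans (hR _ hzC)
    have hzb : ∀ m, m < n - 1 → ∀ j, |z (m+1) j| ≤ Bc (m+1) j := by
      intro m hm j
      obtain ⟨h1, h2⟩ := hbox2 m (Finset.mem_range.mpr hm) j
      rw [hBcS, abs_le]
      constructor
      · have : (0:ℝ) ≤ max (l (m+1) j) 0 := le_max_right _ _
        have := abs_nonneg (l (m+1) j); have := abs_nonneg (u (m+1) j)
        linarith
      · have : max (u (m+1) j) 0 ≤ |u (m+1) j| :=
          max_le (le_abs_self _) (abs_nonneg _)
        have := abs_nonneg (l (m+1) j)
        linarith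
    have hzAll : ∀ m, m < n - 1 → ∀ j, |z m j| ≤ Bc m j := by
      intro m hm j
      match m with
      | 0 => exact hz0b j
      | (m'+1) => exact hzb m' (by omega) j
    have hzhatb : ∀ m, m < n - 1 → ∀ j, |zhat (m+1) j| ≤ Bc (m+1) j := by
      intro m hm j
      obtain ⟨h1, h2⟩ := hbox1 m (Finset.mem_range.mpr hm) j
      rw [hBcS, abs_le]
      have := neg_abs_le (l (m+1) j); have := le_abs_self (u (m+1) j)
      have := abs_nonneg (l (m+1) j); have := abs_nonneg (u (m+1) j)
      constructor <;> linarith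
    -- bound the three parts
    have hzAll2 : ∀ m, m ≤ n - 1 → ∀ j, |z m j| ≤ Bc m j := by
      intro m hm j
      rcases m with _ | m'
      · exact hz0b j
      · exact hzb m' (by omega) j
    have hT0 : -(∑ j, |Wn j| * Bc (n-1) j) ≤ ∑ j, Wn j * z (n-1) j := by
      refine ldd_sum_lb _ _ _ _ fun j _ => ?_
      exact hzAll2 (n-1) le_rfl j
    have hT1 : -(∑ m ∈ Finset.range (n-1), ∑ j, |μ (m+1) j| *
          (Bc (m+1) j + (∑ i, |W m j i| * Bc m i) + |b m j|))
        ≤ ∑ m ∈ Finset.range (n-1), ∑ j,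
            μ (m+1) j * (zhat (m+1) j - Matrix.mulVec (W m) (z m) j - b m j) := by
      rw [← Finset.sum_neg_distrib]
      refine Finset.sum_le_sum fun m hm => ?_
      refine ldd_sum_lb _ _ _ _ fun j _ => ?_
      have hmv : |Matrix.mulVec (W m) (z m) j| ≤ ∑ i, |W m j i| * Bc m i := by
        simp only [Matrix.mulVec, dotProduct]
        refine (Finset.abs_sum_le_sum_abs _ _).trans
          (Finset.sum_le_sum fun i _ => ?_)
        rw [abs_mul]
        exact mul_le_mul_of_nonneg_left (hzAll m (Finset.mem_range.mp hm) i)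
          (abs_nonneg _)
      have h1 := hzhatb m (Finset.mem_range.mp hm) j
      calc |zhat (m+1) j - Matrix.mulVec (W m) (z m) j - b m j|
          ≤ |zhat (m+1) j - Matrix.mulVec (W m) (z m) j| + |b m j| := abs_sub _ _
        _ ≤ |zhat (m+1) j| + |Matrix.mulVec (W m) (z m) j| + |b m j| := by
            have := abs_sub (zhat (m+1) j) (Matrix.mulVec (W m) (z m) j)
            linarith
        _ ≤ Bc (m+1) j + (∑ i, |W m j i| * Bc m i) + |b m j| := by linarith
    have hT2 : -(∑ m ∈ Finset.range (n-1), ∑ j, |lam (m+1) j| * (2 * Bc (m+1) j))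
        ≤ ∑ m ∈ Finset.range (n-1), ∑ j,
            lam (m+1) j * (z (m+1) j - max (zhat (m+1) j) 0) := by
      rw [← Finset.sum_neg_distrib]
      refine Finset.sum_le_sum fun m hm => ?_
      refine ldd_sum_lb _ _ _ _ fun j _ => ?_
      have h1 := hzb m (Finset.mem_range.mp hm) j
      have h2 := hzhatb m (Finset.mem_range.mp hm) j
      have h3 : |max (zhat (m+1) j) 0| ≤ |zhat (m+1) j| := by
        rcases le_total (zhat (m+1) j) 0 with h | h
        · rw [max_eq_right h]; simp [abs_nonneg]
        · rw [max_eq_left h]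
      calc |z (m+1) j - max (zhat (m+1) j) 0|
          ≤ |z (m+1) j| + |max (zhat (m+1) j) 0| := abs_sub _ _
        _ ≤ 2 * Bc (m+1) j := by linarith
    linarith
  -- nonemptiness of the second (decomposition) feasible set: show sInf₁ ≤ sInf₂
  refine le_csInf ?_ ?_
  · -- the decomposition set is nonempty
    refine ⟨_, lddZ dd l z0, lddZA dd W b l z0, (fun k => l k), hz0,
      fun j => rfl, ?_, ?_, fun m _ j => rfl, rfl⟩
    · intro m hm j
      exact ⟨le_rfl, hlu (m+1) (by omega) (by simp at hm; omega) j⟩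
    · intro m hm j
      have hlum := hlu (m+1) (by omega) (by simp at hm; omega) j
      rw [lddZ_succ]
      refine ⟨fun hl0 hu0 => ⟨le_max_right _ _, le_max_left _ _, ?_⟩,
        fun hu0 => max_eq_right (by linarith), fun h0l => max_eq_left h0l⟩
      rw [max_eq_right hl0.le]
      simp
  · rintro y ⟨z, zA, zB, hzC, hzA1, hbox, hph, hzArec, rfl⟩
    -- the recursion for zA, uniformly
    have hzA : ∀ m ∈ Finset.range (n-1), ∀ j,
        zA (m+1) j = Matrix.mulVec (W m) (z m) j + b m j := by
      intro m hm j
      match m with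
      | 0 => exact hzA1 j
      | (m'+1) =>
        refine hzArec m' ?_ j
        simp only [Finset.mem_range] at hm ⊢
        omega
    -- choose the relaxation's zhat coordinatewise
    have hex : ∀ m : ℕ, ∀ j : Fin (dd (m+1)), ∃ t,
        m ∈ Finset.range (n-1) →
        (l (m+1) j ≤ t ∧ t ≤ u (m+1) j ∧
          μ (m+1) j * t + lam (m+1) j * (z (m+1) j - max t 0)
            ≤ μ (m+1) j * zB (m+1) j) := by
      intro m j
      by_cases hm : m ∈ Finset.range (n-1)
      · obtain ⟨t, h⟩ := ldd_key (l (m+1) j) (u (m+1) j) (zB (m+1) j)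
          (z (m+1) j) (μ (m+1) j) (lam (m+1) j)
          (hbox m hm j).1 (hbox m hm j).2 (hph m hm j)
        exact ⟨t, fun _ => h⟩
      · exact ⟨0, fun h => absurd h hm⟩
    choose t ht using hex
    set zhat : (k : ℕ) → Fin (dd k) → ℝ := fun k => match k with
      | 0 => fun _ => 0
      | (m+1) => t m with hzhat
    have hzhS : ∀ m (j : Fin (dd (m+1))), zhat (m+1) j = t m j := fun _ _ => rfl
    -- the candidate point in the relaxation set
    have hmem : ((∑ j, Wn j * z (n - 1) j) + bn
          + ∑ m ∈ Finset.range (n - 1), ∑ j,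
              μ (m + 1) j * (zhat (m + 1) j - Matrix.mulVec (W m) (z m) j - b m j)
          + ∑ m ∈ Finset.range (n - 1), ∑ j,
              lam (m + 1) j * (z (m + 1) j - max (zhat (m + 1) j) 0)) ∈ {y : ℝ |
      ∃ (z : (k : ℕ) → Fin (dd k) → ℝ) (zhat : (k : ℕ) → Fin (dd k) → ℝ),
        z 0 ∈ C ∧
        (∀ m ∈ Finset.range (n - 1), ∀ j,
          l (m + 1) j ≤ zhat (m + 1) j ∧ zhat (m + 1) j ≤ u (m + 1) j) ∧
        (∀ m ∈ Finset.range (n - 1), ∀ j,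
          max (l (m + 1) j) 0 ≤ z (m + 1) j ∧ z (m + 1) j ≤ max (u (m + 1) j) 0) ∧
        y = (∑ j, Wn j * z (n - 1) j) + bn
          + ∑ m ∈ Finset.range (n - 1), ∑ j,
              μ (m + 1) j * (zhat (m + 1) j - Matrix.mulVec (W m) (z m) j - b m j)
          + ∑ m ∈ Finset.range (n - 1), ∑ j,
              lam (m + 1) j * (z (m + 1) j - max (zhat (m + 1) j) 0)} := by
      refine ⟨z, zhat, hzC, ?_, ?_, rfl⟩
      · intro m hm j
        rw [hzhS]
        exact ⟨(ht m j hm).1, (ht m j hm).2.1⟩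
      · intro m hm j
        exact ldd_zbox _ _ _ _ (hbox m hm j).1 (hbox m hm j).2 (hph m hm j)
    -- compare values
    have hsum : (∑ m ∈ Finset.range (n - 1), ∑ j,
              μ (m + 1) j * (zhat (m + 1) j - Matrix.mulVec (W m) (z m) j - b m j))
          + ∑ m ∈ Finset.range (n - 1), ∑ j,
              lam (m + 1) j * (z (m + 1) j - max (zhat (m + 1) j) 0)
        ≤ ∑ m ∈ Finset.range (n - 1), ∑ j,
              μ (m + 1) j * (zB (m + 1) j - zA (m + 1) j) := by
      rw [← Finset.sum_add_distrib]
      refine Finset.sum_le_sum fun m hm => ?_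
      rw [← Finset.sum_add_distrib]
      refine Finset.sum_le_sum fun j _ => ?_
      rw [hzA m hm j, hzhS]
      have h3 := (ht m j hm).2.2
      nlinarith [h3]
    exact (csInf_le hBdd hmem).trans (by linarith)
end

section
/- For all real numbers l ≤ u and all a, b, λ ∈ ℝ, the infimum over x ∈ [l, u] of a·x + b·max(x, 0) is at least the sum of the infimum over x ∈ [l, u] of a·x − λ·max(x, 0) and the infimum over z ∈ [max(l, 0), max(u, 0)] of (b + λ)·z. -/
/-- The per-coordinate inequality underlying the proof that the Lagrangian-decomposition
dual dominates the Lagrangian-relaxation dual for ReLU activations. -/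
theorem relu_split_inf_le (l u a b lam : ℝ) (h : l ≤ u) :
    sInf ((fun x : ℝ => a * x - lam * max x 0) '' Set.Icc l u)
      + sInf ((fun z : ℝ => (b + lam) * z) '' Set.Icc (max l 0) (max u 0))
    ≤ sInf ((fun x : ℝ => a * x + b * max x 0) '' Set.Icc l u) := by
  have hK1 : IsCompact ((fun x : ℝ => a * x - lam * max x 0) '' Set.Icc l u) :=
    isCompact_Icc.image (by continuity)
  have hK2 : IsCompact ((fun z : ℝ => (b + lam) * z) '' Set.Icc (max l 0) (max u 0)) :=
    isCompact_Icc.image (by continuity)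
  have hne : ((fun x : ℝ => a * x + b * max x 0) '' Set.Icc l u).Nonempty :=
    ⟨_, ⟨l, ⟨le_rfl, h⟩, rfl⟩⟩
  apply le_csInf hne
  rintro y ⟨x, hx, rfl⟩
  have h1 : sInf ((fun x : ℝ => a * x - lam * max x 0) '' Set.Icc l u)
      ≤ a * x - lam * max x 0 := csInf_le hK1.bddBelow ⟨x, hx, rfl⟩
  have h2 : sInf ((fun z : ℝ => (b + lam) * z) '' Set.Icc (max l 0) (max u 0))
      ≤ (b + lam) * max x 0 :=
    csInf_le hK2.bddBelow ⟨max x 0, ⟨max_le_max hx.1 le_rfl, max_le_max hx.2 le_rfl⟩, rfl⟩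
  calc _ ≤ a * x - lam * max x 0 + (b + lam) * max x 0 := add_le_add h1 h2
    _ = a * x + b * max x 0 := by ring
end

section
/- Let l < 0 < u be real numbers and let T(l, u) = {(x, z) ∈ ℝ² : l ≤ x ≤ u, z ≥ 0, z ≥ x, z ≤ u·(x − l)/(u − l)}. Then for all a, w ∈ ℝ, the infimum over (x, z) ∈ T(l, u) of a·x − w·z equals the infimum over x ∈ [l, u] of (a − max(w, 0)·u/(u − l))·x − min(w, 0)·max(x, 0), plus the constant max(w, 0)·u·l/(u − l). -/
/-- Reduction of the two-variable linear subproblem over the PLANET triangle `T(l,u)` of an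
ambiguous ReLU to a one-dimensional minimization of a piecewise-linear function. -/
theorem planet_triangle_inf_eq_piecewise (l u : ℝ) (hl : l < 0) (hu : 0 < u) (a w : ℝ) :
    sInf {y : ℝ | ∃ p : ℝ × ℝ,
        (l ≤ p.1 ∧ p.1 ≤ u ∧ 0 ≤ p.2 ∧ p.1 ≤ p.2 ∧ p.2 ≤ u * (p.1 - l) / (u - l)) ∧
        y = a * p.1 - w * p.2}
    = sInf {y : ℝ | ∃ x ∈ Set.Icc l u,
        y = (a - max w 0 * u / (u - l)) * x - min w 0 * max x 0}
      + max w 0 * u * l / (u - l) := by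
  have hA : (0:ℝ) < u - l := by linarith
  set g : ℝ → ℝ := fun x => (a - max w 0 * u / (u - l)) * x - min w 0 * max x 0 with hg
  set c : ℝ := max w 0 * u * l / (u - l) with hc
  set S1 : Set ℝ := {y : ℝ | ∃ p : ℝ × ℝ,
        (l ≤ p.1 ∧ p.1 ≤ u ∧ 0 ≤ p.2 ∧ p.1 ≤ p.2 ∧ p.2 ≤ u * (p.1 - l) / (u - l)) ∧
        y = a * p.1 - w * p.2} with hS1
  set S2 : Set ℝ := {y : ℝ | ∃ x ∈ Set.Icc l u, y = g x} with hS2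
  -- upper bound on z for members of the triangle
  have hub : ∀ x : ℝ, x ≤ u → u * (x - l) / (u - l) ≤ u := by
    intro x hx
    rw [div_le_iff₀ hA]
    nlinarith
  have hxub : ∀ x : ℝ, l ≤ x → x ≤ u → x ≤ u * (x - l) / (u - l) := by
    intro x h1 h2
    rw [le_div_iff₀ hA]
    nlinarith
  -- key inequality
  have key1 : ∀ x z : ℝ, l ≤ x → x ≤ u → 0 ≤ z → x ≤ z → z ≤ u * (x - l) / (u - l) →
      g x + c ≤ a * x - w * z := by
    intro x z h1 h2 h3 h4 h5
    rcases le_or_gt 0 w with hw | hw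
    · have hmax : max w 0 = w := max_eq_left hw
      have hmin : min w 0 = (0:ℝ) := min_eq_right hw
      have h6 : w * z ≤ w * (u * (x - l) / (u - l)) := mul_le_mul_of_nonneg_left h5 hw
      have heq : g x + c = a * x - w * (u * (x - l) / (u - l)) := by
        rw [hg, hc, hmax, hmin]
        field_simp
        ring
      rw [heq]
      linarith
    · have hmax : max w 0 = (0:ℝ) := max_eq_right hw.le
      have hmin : min w 0 = w := min_eq_left hw.le
      have h6 : max x 0 ≤ z := max_le h4 h3
      have h7 : w * z ≤ w * max x 0 := mul_le_mul_of_nonpos_left h6 hw.le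
      have heq : g x + c = a * x - w * max x 0 := by
        rw [hg, hc, hmax, hmin]
        simp
      rw [heq]
      linarith
  -- attainment
  have key2 : ∀ x : ℝ, l ≤ x → x ≤ u → ∃ z : ℝ,
      (0 ≤ z ∧ x ≤ z ∧ z ≤ u * (x - l) / (u - l)) ∧ a * x - w * z = g x + c := by
    intro x h1 h2
    rcases le_or_gt 0 w with hw | hw
    · refine ⟨u * (x - l) / (u - l), ⟨?_, hxub x h1 h2, le_refl _⟩, ?_⟩
      · exact div_nonneg (mul_nonneg hu.le (by linarith)) hA.le
      · rw [hg, hc, max_eq_left hw, min_eq_right hw]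
        field_simp
        ring
    · refine ⟨max x 0, ⟨le_max_right _ _, le_max_left _ _, ?_⟩, ?_⟩
      · exact max_le (hxub x h1 h2)
          (div_nonneg (mul_nonneg hu.le (by linarith)) hA.le)
      · rw [hg, hc, max_eq_right hw.le, min_eq_left hw.le]
        simp
  -- nonemptiness
  have hne1 : S1.Nonempty := by
    refine ⟨a * 0 - w * 0, ⟨(0, 0), ⟨hl.le, hu.le, le_refl _, le_refl _, ?_⟩, rfl⟩⟩
    exact div_nonneg (mul_nonneg hu.le (by norm_num; linarith)) hA.le
  have hne2 : S2.Nonempty := ⟨g 0, 0, ⟨hl.le, hu.le⟩, rfl⟩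
  -- boundedness
  have hbdd2 : BddBelow S2 := by
    have himg : S2 = g '' Set.Icc l u := by
      ext y
      simp [hS2, Set.mem_image, eq_comm]
    rw [himg]
    refine (isCompact_Icc.image ?_).bddBelow
    rw [hg]
    exact (continuous_const.mul continuous_id).sub
      (continuous_const.mul (continuous_id.max continuous_const))
  have hbdd1 : BddBelow S1 := by
    refine ⟨-(|a| * (u - l)) - |w| * u, ?_⟩
    rintro y ⟨⟨x, z⟩, ⟨h1, h2, h3, h4, h5⟩, rfl⟩
    simp only at *
    have hzu : z ≤ u := h5.trans (hub x h2)
    have hax : |a * x| ≤ |a| * (u - l) := by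
      rw [abs_mul]
      exact mul_le_mul_of_nonneg_left (abs_le.mpr ⟨by linarith, by linarith⟩) (abs_nonneg a)
    have hwz : |w * z| ≤ |w| * u := by
      rw [abs_mul]
      refine mul_le_mul_of_nonneg_left ?_ (abs_nonneg w)
      rw [abs_of_nonneg h3]; exact hzu
    have := neg_abs_le (a * x)
    have := le_abs_self (w * z)
    linarith
  -- two inequalities
  apply le_antisymm
  · have h : sInf S1 - c ≤ sInf S2 := by
      refine le_csInf hne2 ?_
      rintro y ⟨x, ⟨h1, h2⟩, rfl⟩
      obtain ⟨z, ⟨hz1, hz2, hz3⟩, hz4⟩ := key2 x h1 h2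
      have hmem : g x + c ∈ S1 := ⟨(x, z), ⟨h1, h2, hz1, hz2, hz3⟩, hz4.symm⟩
      have := csInf_le hbdd1 hmem
      linarith
    linarith
  · refine le_csInf hne1 ?_
    rintro y ⟨⟨x, z⟩, ⟨h1, h2, h3, h4, h5⟩, rfl⟩
    simp only at *
    have hgx : g x ∈ S2 := ⟨x, ⟨h1, h2⟩, rfl⟩
    have h6 := csInf_le hbdd2 hgx
    have h7 := key1 x z h1 h2 h3 h4 h5
    linarith
end

section
/- Let σ(x) = 1/(1 + exp(−x)) be the sigmoid function and let l < u be real numbers. If σ(u)·(1 − σ(u)) ≥ (σ(u) − σ(l))/(u − l), i.e. the derivative of σ at u is at least the slope of the chord through (l, σ(l)) and (u, σ(u)), then for every x ∈ [l, u], σ(x) ≤ φ_{l,u}(x), where φ_{l,u}(x) = σ(l) + ((σ(u) − σ(l))/(u − l))·(x − l) is the chord function. -/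
/-!
Let `s` be the slope of the chord of `σ` over `[l, u]`. If `σ` rose above the chord at some
`x ∈ (l, u)`, the mean value theorem on `[l, x]` and `[x, u]` would give `a < x < b` with
`σ' a > s > σ' b`. But `σ' = σ (1 - σ)` is a concave function of the monotone `σ`, hence
quasiconcave, so `σ' ≥ min (σ' a) (σ' u) ≥ s` on `[a, u]`, a contradiction at `b`.
-/

open Set Real

theorem QuasiconcaveOn.comp_monotone {𝕜 β : Type*} [Field 𝕜] [LinearOrder 𝕜]
    [IsStrictOrderedRing 𝕜] [LE β] {g : 𝕜 → β} {φ : 𝕜 → 𝕜} (hg : QuasiconcaveOn 𝕜 univ g)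
    (hφ : Monotone φ) : QuasiconcaveOn 𝕜 univ (g ∘ φ) := fun r => by
  have h := (hg r).ordConnected.preimage_mono hφ
  simp only [mem_univ, true_and, preimage_ofPred_eq] at h ⊢
  exact h.convex

theorem concaveOn_mul_one_sub : ConcaveOn ℝ univ fun p : ℝ => p * (1 - p) := by
  have h : ConcaveOn ℝ univ fun p : ℝ => p + -p ^ 2 :=
    (concaveOn_id convex_univ).add (Even.convexOn_pow even_two).neg
  convert h using 2
  ring

theorem quasiconcaveOn_sigmoid_mul_one_sub :
    QuasiconcaveOn ℝ univ fun x => sigmoid x * (1 - sigmoid x) :=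
  concaveOn_mul_one_sub.quasiconcaveOn.comp_monotone sigmoid_monotone

theorem le_chord_of_quasiconcaveOn_deriv {f f' : ℝ → ℝ} {l u : ℝ}
    (hfc : ContinuousOn f (Icc l u)) (hf : ∀ x ∈ Ioo l u, HasDerivAt f (f' x) x)
    (hf' : QuasiconcaveOn ℝ (Icc l u) f') (hu : slope f l u ≤ f' u) {x : ℝ}
    (hx : x ∈ Icc l u) : f x ≤ f l + slope f l u * (x - l) := by
  set s := slope f l u
  have hfu : f u = f l + s * (u - l) := by
    have := sub_smul_slope f l u
    rw [smul_eq_mul, vsub_eq_sub] at this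
    linarith
  by_contra! hlt
  obtain rfl | hlx := hx.1.eq_or_lt
  · simp at hlt
  obtain rfl | hxu := hx.2.eq_or_lt
  · exact hlt.ne hfu.symm
  obtain ⟨a, ha, hfa⟩ := exists_hasDerivAt_eq_slope f f' hlx
    (hfc.mono (Icc_subset_Icc_right hxu.le)) fun y hy => hf y ⟨hy.1, hy.2.trans hxu⟩
  obtain ⟨b, hb, hfb⟩ := exists_hasDerivAt_eq_slope f f' hxu
    (hfc.mono (Icc_subset_Icc_left hlx.le)) fun y hy => hf y ⟨hlx.trans hy.1, hy.2⟩
  have hsa : s < f' a := by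
    rw [hfa, lt_div_iff₀ (sub_pos.2 hlx)]
    linarith
  have hbs : f' b < s := by
    rw [hfb, div_lt_iff₀ (sub_pos.2 hxu)]
    linarith
  have hb_mem : b ∈ {y ∈ Icc l u | s ≤ f' y} :=
    (hf' s).ordConnected.out ⟨⟨ha.1.le, (ha.2.trans hxu).le⟩, hsa.le⟩
      ⟨⟨hx.1.trans hxu.le, le_rfl⟩, hu⟩ ⟨(ha.2.trans hb.1).le, hb.2.le⟩
  exact hbs.not_ge hb_mem.2

theorem sigmoid_le_chord {l u : ℝ} (hu : slope sigmoid l u ≤ sigmoid u * (1 - sigmoid u))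
    {x : ℝ} (hx : x ∈ Icc l u) : sigmoid x ≤ sigmoid l + slope sigmoid l u * (x - l) :=
  le_chord_of_quasiconcaveOn_deriv continuous_sigmoid.continuousOn
    (fun y _ => hasDerivAt_sigmoid y)
    (Convex.quasiconcaveOn_restrict quasiconcaveOn_sigmoid_mul_one_sub (subset_univ _)
      (convex_Icc l u))
    hu hx

theorem sigmoid_chord_upper_bound_general (l u : ℝ)
    (hslope :
      (1 / (1 + Real.exp (-u))) * (1 - 1 / (1 + Real.exp (-u)))
        ≥ (1 / (1 + Real.exp (-u)) - 1 / (1 + Real.exp (-l))) / (u - l)) :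
    ∀ x ∈ Set.Icc l u,
      1 / (1 + Real.exp (-x))
        ≤ 1 / (1 + Real.exp (-l))
          + ((1 / (1 + Real.exp (-u)) - 1 / (1 + Real.exp (-l))) / (u - l)) * (x - l) := by
  simp only [one_div, ← sigmoid_def, ← slope_def_field] at hslope ⊢
  exact fun x hx => sigmoid_le_chord hslope hx

/-- Case 1 of the concave upper bound on the sigmoid: if the derivative of the sigmoid `σ`
at `u` is at least the slope of the chord through `(l, σ l)` and `(u, σ u)`, then the chord
upper-bounds `σ` on `[l, u]`. -/
theorem sigmoid_chord_upper_bound (l u : ℝ) (hlu : l < u)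
    (hslope :
      (1 / (1 + Real.exp (-u))) * (1 - 1 / (1 + Real.exp (-u)))
        ≥ (1 / (1 + Real.exp (-u)) - 1 / (1 + Real.exp (-l))) / (u - l)) :
    ∀ x ∈ Set.Icc l u,
      1 / (1 + Real.exp (-x))
        ≤ 1 / (1 + Real.exp (-l))
          + ((1 / (1 + Real.exp (-u)) - 1 / (1 + Real.exp (-l))) / (u - l)) * (x - l) :=
  sigmoid_chord_upper_bound_general l u hslope
end

section
/- Let σ(x) = 1/(1 + exp(−x)) be the sigmoid function and let l, t, u be real numbers with l < t, 0 < t, and t ≤ u, such that σ(t)·(1 − σ(t)) = (σ(t) − σ(l))/(t − l), i.e. the derivative of σ at t equals the slope of the chord through (l, σ(l)) and (t, σ(t)). Define φ : [l, u] → ℝ piecewise by φ(x) = σ(l) + ((σ(t) − σ(l))/(t − l))·(x − l) for x ∈ [l, t] and φ(x) = σ(x) for x ∈ [t, u]. Then φ is concave on [l, u] and σ(x) ≤ φ(x) for every x ∈ [l, u]. -/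
/-!
The tangency condition says that the chord from `l` to `t` is the tangent line of `σ` at `t`,
so the function is `σ` on `[t, u]` continued to the left by its tangent line at `t`. Since
`σ' = 1 / (2 cosh + 2)`, `σ` is concave on `[0, ∞)`, and continuing a concave function to the
left by a tangent line that lies above it keeps it concave. The tangent line lies above `σ` on
all of `[l, ∞)`: `σ x - σ'(t) x` increases on `[-t, t]`, decreases outside it, and takes the
same value at `l` and at `t`.
-/

open Real Set

namespace Real

lemma deriv_sigmoid_eq_one_div_cosh (x : ℝ) : deriv sigmoid x = 1 / (2 * cosh x + 2) := by
  have hprod : exp x * exp (-x) = 1 := by rw [← exp_add, add_neg_cancel, exp_zero]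
  rw [(hasDerivAt_sigmoid x).deriv, ← sigmoid_neg, sigmoid_def, sigmoid_def, cosh_eq]
  field_simp
  linear_combination -hprod

lemma deriv_sigmoid_le_of_abs_le {a b : ℝ} (h : |a| ≤ |b|) :
    deriv sigmoid b ≤ deriv sigmoid a := by
  rw [deriv_sigmoid_eq_one_div_cosh, deriv_sigmoid_eq_one_div_cosh]
  gcongr
  exact cosh_le_cosh.2 h

lemma concaveOn_sigmoid : ConcaveOn ℝ (Ici 0) sigmoid := by
  refine AntitoneOn.concaveOn_of_deriv (convex_Ici 0) continuous_sigmoid.continuousOn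
    differentiable_sigmoid.differentiableOn ?_
  rw [interior_Ici]
  intro a ha b hb hab
  exact deriv_sigmoid_le_of_abs_le (by rwa [abs_of_pos ha, abs_of_pos hb])

lemma hasDerivAt_sigmoid_sub_mul (m y : ℝ) :
    HasDerivAt (fun x ↦ sigmoid x - m * x) (deriv sigmoid y - m) y :=
  ((hasDerivAt_sigmoid y).sub ((hasDerivAt_id y).const_mul m)).congr_deriv
    (by rw [(hasDerivAt_sigmoid y).deriv, mul_one])

lemma sigmoid_le_tangent_of_le {l t x : ℝ} (ht : 0 ≤ t)
    (hl : sigmoid l = sigmoid t + deriv sigmoid t * (l - t)) (hx : l ≤ x) :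
    sigmoid x ≤ sigmoid t + deriv sigmoid t * (x - t) := by
  set g : ℝ → ℝ := fun y ↦ sigmoid y - deriv sigmoid t * y with hg_def
  have hg := hasDerivAt_sigmoid_sub_mul (deriv sigmoid t)
  have hg_diff : Differentiable ℝ g := fun y ↦ (hg y).differentiableAt
  have hg_mono : MonotoneOn g (Icc (-t) t) :=
    monotoneOn_of_deriv_nonneg (convex_Icc _ _) hg_diff.continuous.continuousOn
      hg_diff.differentiableOn fun y hy ↦ by
        obtain ⟨hty, hyt⟩ := interior_subset hy
        rw [(hg y).deriv, sub_nonneg]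
        exact deriv_sigmoid_le_of_abs_le (abs_le_abs hyt (by linarith))
  have hg_anti_left : AntitoneOn g (Iic (-t)) :=
    antitoneOn_of_deriv_nonpos (convex_Iic _) hg_diff.continuous.continuousOn
      hg_diff.differentiableOn fun y hy ↦ by
        have hyt : y ≤ -t := (interior_subset hy : y ∈ Iic (-t))
        rw [(hg y).deriv, sub_nonpos]
        exact deriv_sigmoid_le_of_abs_le
          ((abs_le_abs (by linarith) (by linarith)).trans_eq (abs_neg y))
  have hg_anti_right : AntitoneOn g (Ici t) :=
    antitoneOn_of_deriv_nonpos (convex_Ici _) hg_diff.continuous.continuousOn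
      hg_diff.differentiableOn fun y hy ↦ by
        have hty : t ≤ y := (interior_subset hy : y ∈ Ici t)
        rw [(hg y).deriv, sub_nonpos]
        exact deriv_sigmoid_le_of_abs_le (abs_le_abs hty (by linarith))
  have hgl : g l = g t := by simp only [hg_def, hl]; ring
  suffices g x ≤ g t by simp only [hg_def] at this; linarith
  rcases le_total t x with htx | hxt
  · exact hg_anti_right self_mem_Ici htx htx
  rcases le_total (-t) x with htx | hxt'
  · exact hg_mono ⟨htx, hxt⟩ ⟨by linarith, le_rfl⟩ hxt
  · exact hgl ▸ hg_anti_left (hx.trans hxt') hxt' hx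

end Real

section Gluing

variable {f : ℝ → ℝ} {t u m : ℝ}

/- Write `a x + b y` as `(1 - d) t + d y` with `d ≤ b`; concavity on `[t, u]` bounds the new
combination, and the two combinations differ by `(b - d) (f y - f t - m (y - t)) ≤ 0`. -/
lemma ConcaveOn.mul_line_add_mul_le (hf : ConcaveOn ℝ (Icc t u) f)
    (hle : ∀ x ∈ Icc t u, f x ≤ f t + m * (x - t)) {x y a b : ℝ} (hx : x ≤ t)
    (hy : y ∈ Icc t u) (ha : 0 ≤ a) (hb : 0 ≤ b) (hab : a + b = 1) (hz : t < a * x + b * y) :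
    a * (f t + m * (x - t)) + b * f y ≤ f (a * x + b * y) := by
  have hsplit : a * x + b * y - t = a * (x - t) + b * (y - t) := by linear_combination t * hab
  have hax : a * (x - t) ≤ 0 := mul_nonpos_of_nonneg_of_nonpos ha (sub_nonpos.2 hx)
  have hyt : 0 < y - t := pos_of_mul_pos_right (by linarith) hb
  obtain ⟨d, hd⟩ : ∃ d, d * (y - t) = a * x + b * y - t :=
    ⟨_, div_mul_cancel₀ _ hyt.ne'⟩
  have hd0 : 0 ≤ d := le_of_mul_le_mul_right (by rw [zero_mul]; linarith) hyt
  have hdb : d ≤ b := le_of_mul_le_mul_right (by linarith) hyt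
  have hconc := hf.2 ⟨le_rfl, hy.1.trans hy.2⟩ hy (by linarith) hd0 (sub_add_cancel 1 d)
  have hcomb : (1 - d) • t + d • y = a * x + b * y := by
    simp only [smul_eq_mul]; linear_combination hd
  rw [hcomb, smul_eq_mul, smul_eq_mul] at hconc
  linear_combination hconc + mul_le_mul_of_nonneg_left (hle y hy) (sub_nonneg.2 hdb)
    - m * hd + (f t - m * t) * hab

lemma ConcaveOn.ite_line_of_le_line (hf : ConcaveOn ℝ (Icc t u) f)
    (hle : ∀ x ∈ Icc t u, f x ≤ f t + m * (x - t)) :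
    ConcaveOn ℝ (Iic u) (fun x ↦ if x ≤ t then f t + m * (x - t) else f x) := by
  have hle' : ∀ x ∈ Iic u, (if x ≤ t then f t + m * (x - t) else f x) ≤ f t + m * (x - t) :=
    fun x hx ↦ by
      split_ifs with hxt
      exacts [le_rfl, hle x ⟨(not_le.1 hxt).le, hx⟩]
  refine LinearOrder.concaveOn_of_lt (convex_Iic u) fun x hx y hy hxy a b ha hb hab ↦ ?_
  simp only [smul_eq_mul]
  by_cases hz : a * x + b * y ≤ t
  · rw [if_pos hz]
    linear_combination mul_le_mul_of_nonneg_left (hle' x hx) ha.le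
      + mul_le_mul_of_nonneg_left (hle' y hy) hb.le + (f t - m * t) * hab
  have hyt : t < y := (not_le.1 hz).trans_le <| by
    linear_combination mul_le_mul_of_nonneg_left hxy.le ha.le + y * hab
  rw [if_neg hz, if_neg (not_le.2 hyt)]
  split_ifs with hxt
  · exact hf.mul_line_add_mul_le hle hxt ⟨hyt.le, hy⟩ ha.le hb.le hab (not_le.1 hz)
  · exact hf.2 ⟨(not_le.1 hxt).le, hx⟩ ⟨hyt.le, hy⟩ ha.le hb.le hab

end Gluing

theorem sigmoid_piecewise_upper_bound_general (l t u : ℝ) (hlt : l < t) (ht : 0 < t)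
    (htangent :
      (1 / (1 + Real.exp (-t))) * (1 - 1 / (1 + Real.exp (-t)))
        = (1 / (1 + Real.exp (-t)) - 1 / (1 + Real.exp (-l))) / (t - l)) :
    ConcaveOn ℝ (Set.Icc l u)
      (fun x : ℝ =>
        if x ≤ t then
          1 / (1 + Real.exp (-l))
            + ((1 / (1 + Real.exp (-t)) - 1 / (1 + Real.exp (-l))) / (t - l)) * (x - l)
        else 1 / (1 + Real.exp (-x))) ∧
    ∀ x ∈ Set.Icc l u,
      1 / (1 + Real.exp (-x))
        ≤ (if x ≤ t then
            1 / (1 + Real.exp (-l))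
              + ((1 / (1 + Real.exp (-t)) - 1 / (1 + Real.exp (-l))) / (t - l)) * (x - l)
          else 1 / (1 + Real.exp (-x))) := by
  simp only [one_div, ← sigmoid_def] at htangent ⊢
  have hslope : (sigmoid t - sigmoid l) / (t - l) = deriv sigmoid t := by
    rw [(hasDerivAt_sigmoid t).deriv, ← htangent]
  have hl : sigmoid l = sigmoid t + deriv sigmoid t * (l - t) := by
    rw [← hslope]; field_simp [sub_ne_zero.2 hlt.ne']; ring
  have hchord : ∀ x, sigmoid l + (sigmoid t - sigmoid l) / (t - l) * (x - l)
      = sigmoid t + deriv sigmoid t * (x - t) := fun x ↦ by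
    rw [hslope]; linear_combination hl
  simp only [hchord]
  have hconcave : ConcaveOn ℝ (Icc t u) sigmoid :=
    concaveOn_sigmoid.subset (Icc_subset_Ici_self.trans (Ici_subset_Ici.2 ht.le)) (convex_Icc t u)
  refine ⟨(hconcave.ite_line_of_le_line fun x hx ↦ ?_).subset Icc_subset_Iic_self
    (convex_Icc l u), fun x hx ↦ ?_⟩
  · exact sigmoid_le_tangent_of_le ht.le hl (hlt.le.trans hx.1)
  · split_ifs
    exacts [sigmoid_le_tangent_of_le ht.le hl hx.1, le_rfl]

/-- Case 2 of the concave upper bound on the sigmoid: if the tangency condition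
`σ'(t) = (σ t - σ l)/(t - l)` holds at a point `t > 0` with `l < t ≤ u`, then the function
consisting of the chord from `l` to `t` followed by the sigmoid itself is concave on
`[l, u]` and upper-bounds the sigmoid there. -/
theorem sigmoid_piecewise_upper_bound (l t u : ℝ) (hlt : l < t) (ht : 0 < t) (htu : t ≤ u)
    (htangent :
      (1 / (1 + Real.exp (-t))) * (1 - 1 / (1 + Real.exp (-t)))
        = (1 / (1 + Real.exp (-t)) - 1 / (1 + Real.exp (-l))) / (t - l)) :
    ConcaveOn ℝ (Set.Icc l u)
      (fun x : ℝ =>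
        if x ≤ t then
          1 / (1 + Real.exp (-l))
            + ((1 / (1 + Real.exp (-t)) - 1 / (1 + Real.exp (-l))) / (t - l)) * (x - l)
        else 1 / (1 + Real.exp (-x))) ∧
    ∀ x ∈ Set.Icc l u,
      1 / (1 + Real.exp (-x))
        ≤ (if x ≤ t then
            1 / (1 + Real.exp (-l))
              + ((1 / (1 + Real.exp (-t)) - 1 / (1 + Real.exp (-l))) / (t - l)) * (x - l)
          else 1 / (1 + Real.exp (-x))) :=
  sigmoid_piecewise_upper_bound_general l t u hlt ht htangent
end

section
/- Let l < 0 < u be real numbers and let T(l, u) = {(x, z) ∈ ℝ² : l ≤ x ≤ u, z ≥ 0, z ≥ x, z ≤ u·(x − l)/(u − l)}. Then for every â ∈ ℝ, the minimum over (x, z) ∈ T(l, u) of the linear function (max(â, 0)·u/(u − l))·x − â·z equals max(â, 0)·u·l/(u − l). -/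
/-!
Write `â = max â 0 - max (-â) 0` and `s = u / (u - l)`. The objective then splits as
`max â 0 * (s * x - z) + max (-â) 0 * z`, a nonnegative combination of `s * x - z`, which is at
least `s * l` below the upper facet `z = s * (x - l)`, and of `z ≥ 0`. Both bounds are tight at the
vertex `(l, 0)`, where that facet meets `z = 0`.
-/

theorem max_zero_mul_mul_le_of_le_mul_sub {K : Type*} [CommRing K] [LinearOrder K]
    [IsOrderedRing K] {a s l x z : K} (hz₀ : 0 ≤ z) (hz : z ≤ s * (x - l)) :
    max a 0 * s * l ≤ max a 0 * s * x - a * z := by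
  have h₁ : 0 ≤ max a 0 * (s * (x - l) - z) := mul_nonneg (le_max_right _ _) (sub_nonneg.2 hz)
  have h₂ : 0 ≤ (max a 0 - a) * z := mul_nonneg (sub_nonneg.2 (le_max_left _ _)) hz₀
  linear_combination h₁ + h₂

/-- Per-coordinate computation for an ambiguous ReLU: evaluating the decomposition dual at
the Wong–Kolter dual variables, the minimum over the PLANET triangle `T(l,u)` of the linear
function `(max â 0 * u/(u-l)) * x - â * z` equals `max â 0 * u * l / (u - l)`. -/
theorem planet_triangle_wong_kolter_value (l u : ℝ) (hl : l < 0) (hu : 0 < u) (ahat : ℝ) :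
    IsLeast
      {y : ℝ | ∃ p : ℝ × ℝ,
        (l ≤ p.1 ∧ p.1 ≤ u ∧ 0 ≤ p.2 ∧ p.1 ≤ p.2 ∧ p.2 ≤ u * (p.1 - l) / (u - l)) ∧
        y = (max ahat 0 * u / (u - l)) * p.1 - ahat * p.2}
      (max ahat 0 * u * l / (u - l)) := by
  have hvalue : max ahat 0 * u * l / (u - l) = max ahat 0 * (u / (u - l)) * l := by ring
  refine ⟨⟨(l, 0), ⟨le_rfl, by linarith, le_rfl, hl.le, by simp⟩, by rw [hvalue]; ring⟩, ?_⟩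
  rintro y ⟨⟨x, z⟩, ⟨-, -, hz₀, -, hz⟩, rfl⟩
  rw [mul_div_right_comm] at hz
  calc max ahat 0 * u * l / (u - l) = max ahat 0 * (u / (u - l)) * l := hvalue
    _ ≤ max ahat 0 * (u / (u - l)) * x - ahat * z := max_zero_mul_mul_le_of_le_mul_sub hz₀ hz
    _ = max ahat 0 * u / (u - l) * x - ahat * z := by ring
end
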